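/- Let r, m, n ∈ ℕ with m ≥ n, let {a_k}_{k=1}^∞ ⊂ ℂ, and let x ∈ ℝ satisfy x ≠ 2lπ/r for every integer l. Then Σ_{k=n}^{m} a_k sin(kx) = − Σ_{k=n}^{m} (Δ_r a_k) D̃_{k,r}(x) + Σ_{k=m+1}^{m+r} a_k D̃_{k,−r}(x) − Σ_{k=n}^{n+r−1} a_k D̃_{k,−r}(x). -/

import Mathlib

noncomputable section

theorem statement2 (r : ℕ) (hr : 1 ≤ r) (m n : ℕ) (hn : 1 ≤ n) (hnm : n ≤ m)
    (a : ℕ → ℂ) (x : ℝ) (hx : ∀ l : ℤ, x ≠ 2 * l * Real.pi / r) :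
    ∑ k ∈ Finset.Icc n m, a k * (Real.sin (k * x) : ℂ) =
      - ∑ k ∈ Finset.Icc n m, (a k - a (k + r)) *
          ((Real.cos (((k : ℝ) + r / 2) * x) / (2 * Real.sin (r * x / 2)) : ℝ) : ℂ)
      + ∑ k ∈ Finset.Icc (m + 1) (m + r), a k *
          ((Real.cos (((k : ℝ) - r / 2) * x) / (2 * Real.sin (-(r * x / 2))) : ℝ) : ℂ)
      - ∑ k ∈ Finset.Icc n (n + r - 1), a k *
          ((Real.cos (((k : ℝ) - r / 2) * x) / (2 * Real.sin (-(r * x / 2))) : ℝ) : ℂ) := by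
  have hr0 : (r : ℝ) ≠ 0 := Nat.cast_ne_zero.mpr (by omega)
  have hs : Real.sin ((r : ℝ) * x / 2) ≠ 0 := by
    intro h
    rcases Real.sin_eq_zero_iff.mp h with ⟨l, hl⟩
    apply hx l
    field_simp at hl ⊢
    linarith
  set Dp : ℕ → ℂ := fun k =>
    ((Real.cos (((k : ℝ) + r / 2) * x) / (2 * Real.sin ((r : ℝ) * x / 2)) : ℝ) : ℂ) with hDp
  set F : ℕ → ℂ := fun k =>
    a k * ((Real.cos (((k : ℝ) - r / 2) * x) / (2 * Real.sin (-((r : ℝ) * x / 2))) : ℝ) : ℂ)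
    with hF
  -- pointwise identity
  have key1 : ∀ k : ℕ, a k * (Real.sin (k * x) : ℂ) = -(a k * Dp k) - F k := by
    intro k
    have htrig : Real.cos (((k : ℝ) - r / 2) * x) - Real.cos (((k : ℝ) + r / 2) * x)
        = 2 * Real.sin (k * x) * Real.sin ((r : ℝ) * x / 2) := by
      have h1 : ((k : ℝ) - r / 2) * x = (k : ℝ) * x - (r : ℝ) * x / 2 := by ring
      have h2 : ((k : ℝ) + r / 2) * x = (k : ℝ) * x + (r : ℝ) * x / 2 := by ring
      rw [h1, h2, Real.cos_sub, Real.cos_add]; ring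
    have hreal : (Real.sin ((k : ℝ) * x) : ℝ)
        = -(Real.cos (((k : ℝ) + r / 2) * x) / (2 * Real.sin ((r : ℝ) * x / 2)))
          - Real.cos (((k : ℝ) - r / 2) * x) / (2 * Real.sin (-((r : ℝ) * x / 2))) := by
      rw [Real.sin_neg]
      set c1 := Real.cos (((k : ℝ) - r / 2) * x)
      set c2 := Real.cos (((k : ℝ) + r / 2) * x)
      field_simp
      rw [eq_div_iff (by rwa [mul_comm] at hs), mul_comm x]
      linarith [htrig]
    simp only [hDp, hF]
    rw [hreal]
    push_cast
    ring
  have key2 : ∀ k : ℕ, a (k + r) * Dp k = -F (k + r) := by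
    intro k
    have hcos : Real.cos ((((k + r : ℕ) : ℝ) - r / 2) * x) = Real.cos (((k : ℝ) + r / 2) * x) := by
      congr 1
      push_cast
      ring
    simp only [hDp, hF, hcos, Real.sin_neg]
    push_cast
    field_simp
  -- interval bookkeeping
  have hIcc1 : Finset.Icc n (n + r - 1) = Finset.Ico n (n + r) := by
    rw [← Finset.Ico_add_one_right_eq_Icc]
    congr 1
    omega
  have hsplit1 : (∑ k ∈ Finset.Icc n (n + r - 1), F k) + ∑ k ∈ Finset.Icc (n + r) (m + r), F k
      = ∑ k ∈ Finset.Icc n (m + r), F k := by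
    rw [hIcc1, ← Finset.Ico_add_one_right_eq_Icc, ← Finset.Ico_add_one_right_eq_Icc]
    exact Finset.sum_Ico_consecutive _ (by omega) (by omega)
  have hsplit2 : (∑ k ∈ Finset.Icc n m, F k) + ∑ k ∈ Finset.Icc (m + 1) (m + r), F k
      = ∑ k ∈ Finset.Icc n (m + r), F k := by
    rw [← Finset.Ico_add_one_right_eq_Icc, ← Finset.Ico_add_one_right_eq_Icc, ← Finset.Ico_add_one_right_eq_Icc]
    exact Finset.sum_Ico_consecutive _ (by omega) (by omega)
  have hshift : ∑ k ∈ Finset.Icc (n + r) (m + r), F k = ∑ k ∈ Finset.Icc n m, F (k + r) := by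
    rw [← Finset.map_add_right_Icc, Finset.sum_map]
    rfl
  have hΔ : ∑ k ∈ Finset.Icc n m, (a k - a (k + r)) * Dp k
      = (∑ k ∈ Finset.Icc n m, a k * Dp k) + ∑ k ∈ Finset.Icc (n + r) (m + r), F k := by
    rw [hshift]
    rw [← Finset.sum_add_distrib]
    refine Finset.sum_congr rfl fun k _ => ?_
    rw [sub_mul, key2 k]
    ring
  have h0 : ∑ k ∈ Finset.Icc n m, a k * (Real.sin (k * x) : ℂ)
      = -(∑ k ∈ Finset.Icc n m, a k * Dp k) - ∑ k ∈ Finset.Icc n m, F k := by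
    rw [← Finset.sum_neg_distrib, ← Finset.sum_sub_distrib]
    exact Finset.sum_congr rfl fun k _ => key1 k
  simp only [hDp, hF] at h0 hΔ hsplit1 hsplit2 ⊢
  linear_combination h0 + hΔ + hsplit1 - hsplit2
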